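/- arXiv:1911.02010 — 2 statements merged into one kernel-verified Lean document; each statement's English description precedes it below -/
import Mathlib

section
/- Let $h \in L^1(\mathbb{R}^d)$ whose Fourier transform $\mathcal{F}h$ is integrable and supported in the ball $\{\|\zeta\|\le R\}$, and let $\Sigma$ be a positive semidefinite matrix. Define $g(x) := (2\pi)^{-d/2}\int_{\|\zeta\|\le R} \mathcal{F}h(\zeta)\, e^{\langle\Sigma\zeta,\zeta\rangle/2}\, e^{i\zeta\cdot x}\, d\zeta$. Then for $\xi \sim \mathcal{N}(0,\Sigma)$ and every $\theta \in \mathbb{R}^d$, $\mathbb{E}\,g(\theta+\xi) = h(\theta)$; i.e., $g(x)$ is an unbiased estimator of $h(\theta)$ under the Gaussian shift model $x = \theta+\xi$. -/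
/-!
Average `g (θ + ξ)` over `ξ ∼ 𝒩(0, Σ)` and exchange the two integrals (the integrand is dominated
by `|𝓕h|` times a constant, since `e^{⟨Σζ, ζ⟩/2}` is bounded on the ball). Each frequency `ζ` then
contributes `𝔼 e^{i⟨ζ, θ + ξ⟩} = e^{i⟨ζ, θ⟩} e^{-⟨Σζ, ζ⟩/2}`, which cancels the factor
`e^{⟨Σζ, ζ⟩/2}` in `g`. What is left is the Fourier inversion integral of `h` at `θ`, and the
restriction to the ball is harmless because `𝓕h` vanishes outside it.
-/

open MeasureTheory ProbabilityTheory Complex Module Matrix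
open scoped RealInnerProductSpace MatrixOrder FourierTransform

lemma map_toEuclideanCLM_pi_gaussianReal_eq_multivariateGaussian {ι : Type*} [Fintype ι]
    [DecidableEq ι] {S : Matrix ι ι ℝ} (hS : S.PosSemidef) :
    ((Measure.pi fun _ : ι => gaussianReal 0 1).map (EuclideanSpace.equiv ι ℝ).symm).map
      (toEuclideanCLM (𝕜 := ℝ) S) = multivariateGaussian 0 (S * S) := by
  rw [multivariateGaussian, CFC.sqrt_mul_self S hS.nonneg]
  simp only [zero_add]
  congr 1
  exact map_pi_eq_stdGaussian

lemma cexp_inner_toEuclideanCLM_div_two_mul_charFun_multivariateGaussian {ι : Type*} [Fintype ι]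
    [DecidableEq ι] {A : Matrix ι ι ℝ} (hA : A.PosSemidef) (ζ : EuclideanSpace ℝ ι) :
    cexp (⟪toEuclideanCLM (𝕜 := ℝ) A ζ, ζ⟫ / 2) * charFun (multivariateGaussian 0 A) ζ = 1 := by
  rw [charFun_multivariateGaussian hA, ← exp_add, inner_zero_right, ← inner_toEuclideanCLM,
    real_inner_comm]
  simp

lemma rpow_neg_div_two_mul_self_mul_pow {x : ℝ} (hx : 0 < x) (n : ℕ) :
    x ^ (-(n : ℝ) / 2) * x ^ (-(n : ℝ) / 2) * x ^ n = 1 := by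
  rw [← Real.rpow_add hx, ← Real.rpow_natCast, ← Real.rpow_add hx]
  ring_nf
  exact Real.rpow_zero x

section FourierInversion

variable {V : Type*} [NormedAddCommGroup V] [InnerProductSpace ℝ V] [FiniteDimensional ℝ V]
  [MeasurableSpace V] [BorelSpace V]

lemma fourier_eq_integral_mul_cexp_neg_inner_smul (f : V → ℂ) (w : V) :
    𝓕 f w = ∫ x, f x * cexp (-I * ⟪(2 * Real.pi) • w, x⟫) := by
  rw [Real.fourier_eq']
  congr 1 with x
  rw [smul_eq_mul, real_inner_smul_left, real_inner_comm, mul_comm]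
  congr 2
  push_cast
  ring

lemma fourierInv_eq_integral_mul_cexp_inner_smul (G : V → ℂ) (θ : V) :
    𝓕⁻ G θ = ∫ w, G w * cexp (I * ⟪(2 * Real.pi) • w, θ⟫) := by
  rw [Real.fourierInv_eq']
  congr 1 with w
  rw [smul_eq_mul, real_inner_smul_left, mul_comm]
  congr 2
  push_cast
  ring

lemma integral_fourier_angular_mul_cexp_inner {f : V → ℂ} (hf : Integrable f)
    (hFf : Integrable fun ζ => ∫ x, f x * cexp (-I * ⟪ζ, x⟫)) {θ : V} (hθ : ContinuousAt f θ) :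
    ∫ ζ, (∫ x, f x * cexp (-I * ⟪ζ, x⟫)) * cexp (I * ⟪ζ, θ⟫) =
      ((2 * Real.pi) ^ finrank ℝ V : ℝ) * f θ := by
  have h2π : 2 * Real.pi ≠ 0 := by positivity
  have hF : 𝓕 f = fun w => ∫ x, f x * cexp (-I * ⟪(2 * Real.pi) • w, x⟫) :=
    funext (fourier_eq_integral_mul_cexp_neg_inner_smul f)
  have hinv := hf.fourierInv_fourier_eq (hF ▸ (integrable_comp_smul_iff volume _ h2π).2 hFf) hθ
  rw [fourierInv_eq_integral_mul_cexp_inner_smul, hF,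
    Measure.integral_comp_smul (μ := volume)
      (fun ζ => (∫ x, f x * cexp (-I * ⟪ζ, x⟫)) * cexp (I * ⟪ζ, θ⟫))] at hinv
  rw [← hinv, Complex.real_smul, ← mul_assoc, ← ofReal_mul, abs_of_pos (by positivity),
    mul_inv_cancel₀ (by positivity), ofReal_one, one_mul]

end FourierInversion

lemma integral_integral_mul_cexp_inner_add_eq_charFun {V : Type*} [NormedAddCommGroup V]
    [InnerProductSpace ℝ V] [MeasurableSpace V] [OpensMeasurableSpace V] [SecondCountableTopology V]
    (ν ρ : Measure V) [IsFiniteMeasure ν] [SFinite ρ] {F : V → ℂ} (hF : Integrable F ρ) (θ : V) :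
    ∫ x, ∫ ζ, F ζ * cexp (I * ⟪ζ, θ + x⟫) ∂ρ ∂ν =
      ∫ ζ, F ζ * cexp (I * ⟪ζ, θ⟫) * charFun ν ζ ∂ρ := by
  have hnorm (x ζ : V) : ‖F ζ * cexp (I * ⟪ζ, θ + x⟫)‖ = ‖F ζ‖ := by
    rw [norm_mul, mul_comm I, norm_exp_ofReal_mul_I, mul_one]
  have hmeas : AEStronglyMeasurable (Function.uncurry fun x ζ => F ζ * cexp (I * ⟪ζ, θ + x⟫))
      (ν.prod ρ) :=
    hF.1.comp_snd.mul
      (by fun_prop : Continuous fun p : V × V => cexp (I * ⟪p.2, θ + p.1⟫)).aestronglyMeasurable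
  have hint : Integrable (Function.uncurry fun x ζ => F ζ * cexp (I * ⟪ζ, θ + x⟫)) (ν.prod ρ) := by
    refine (integrable_prod_iff hmeas).2 ⟨ae_of_all _ fun x => ?_, ?_⟩
    · have hcexp : Continuous fun ζ : V => cexp (I * ⟪ζ, θ + x⟫) := by fun_prop
      exact hF.mono (hF.1.mul hcexp.aestronglyMeasurable) (ae_of_all _ fun ζ => (hnorm x ζ).le)
    · simp only [Function.uncurry_apply_pair, hnorm]
      exact integrable_const _
  rw [integral_integral_swap hint]
  congr 1 with ζ
  rw [charFun_apply, ← integral_const_mul]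
  congr 1 with x
  rw [inner_add_right, real_inner_comm x ζ, ofReal_add, mul_add, exp_add, mul_comm _ I, mul_assoc]

theorem stmt13_general (d : ℕ) (R : ℝ)
    (h : EuclideanSpace ℝ (Fin d) → ℝ) (hcont : Continuous h) (hint : Integrable h)
    (Fh : EuclideanSpace ℝ (Fin d) → ℂ)
    (hFh : ∀ ζ, Fh ζ = (((2 * Real.pi) ^ (-(d : ℝ) / 2) : ℝ) : ℂ) *
      ∫ x : EuclideanSpace ℝ (Fin d),
        (h x : ℂ) * Complex.exp (-Complex.I * ((inner ℝ ζ x : ℝ) : ℂ)))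
    (hFhInt : Integrable Fh)
    (hsupp : ∀ ζ : EuclideanSpace ℝ (Fin d), R < ‖ζ‖ → Fh ζ = 0)
    (Sigm S : Matrix (Fin d) (Fin d) ℝ) (hSigm : Sigm.PosSemidef)
    (hS : S.PosSemidef) (hSS : S * S = Sigm)
    (μ : Measure (EuclideanSpace ℝ (Fin d)))
    (hμ : μ = Measure.map (fun z => (Matrix.toEuclideanCLM (𝕜 := ℝ) S) z)
      (Measure.map (⇑(EuclideanSpace.equiv (Fin d) ℝ).symm)
        (Measure.pi fun _ : Fin d => ProbabilityTheory.gaussianReal 0 1)))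
    (g : EuclideanSpace ℝ (Fin d) → ℂ)
    (hg : ∀ x, g x = (((2 * Real.pi) ^ (-(d : ℝ) / 2) : ℝ) : ℂ) *
      ∫ ζ in {ζ : EuclideanSpace ℝ (Fin d) | ‖ζ‖ ≤ R},
        Fh ζ *
          Complex.exp
            ((((inner ℝ ((Matrix.toEuclideanCLM (𝕜 := ℝ) Sigm) ζ) ζ : ℝ) : ℂ)) / 2) *
          Complex.exp (Complex.I * ((inner ℝ ζ x : ℝ) : ℂ)))
    (θ : EuclideanSpace ℝ (Fin d)) :
    ∫ x, g (θ + x) ∂μ = (h θ : ℂ) := by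
  set c : ℝ := (2 * Real.pi) ^ (-(d : ℝ) / 2)
  have hc0 : (c : ℂ) ≠ 0 := ofReal_ne_zero.2 (by positivity)
  set q : EuclideanSpace ℝ (Fin d) → ℝ := fun ζ => ⟪toEuclideanCLM (𝕜 := ℝ) Sigm ζ, ζ⟫
  have hμ' : μ = multivariateGaussian 0 Sigm :=
    hSS ▸ hμ.trans (map_toEuclideanCLM_pi_gaussianReal_eq_multivariateGaussian hS)
  have : IsProbabilityMeasure μ := hμ' ▸ inferInstance
  have hFB : IntegrableOn (fun ζ => Fh ζ * cexp (q ζ / 2)) {ζ | ‖ζ‖ ≤ R} := by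
    rw [show {ζ : EuclideanSpace ℝ (Fin d) | ‖ζ‖ ≤ R} = Metric.closedBall 0 R by ext; simp]
    exact hFhInt.integrableOn.mul_continuousOn (by fun_prop) (isCompact_closedBall 0 R)
  have hcancel (ζ : EuclideanSpace ℝ (Fin d)) :
      Fh ζ * cexp (q ζ / 2) * cexp (I * ⟪ζ, θ⟫) * charFun μ ζ = Fh ζ * cexp (I * ⟪ζ, θ⟫) := by
    rw [hμ']
    linear_combination (Fh ζ * cexp (I * ⟪ζ, θ⟫)) *
      cexp_inner_toEuclideanCLM_div_two_mul_charFun_multivariateGaussian hSigm ζ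
  have hFint : Integrable fun ζ => ∫ x, (h x : ℂ) * cexp (-I * ⟪ζ, x⟫) :=
    (hFhInt.const_mul (c⁻¹ : ℂ)).congr
      (ae_of_all _ fun ζ => by simp only [hFh, inv_mul_cancel_left₀ hc0])
  calc ∫ x, g (θ + x) ∂μ
      = c * ∫ ζ in {ζ | ‖ζ‖ ≤ R}, Fh ζ * cexp (q ζ / 2) * cexp (I * ⟪ζ, θ⟫) * charFun μ ζ := by
        simp_rw [hg, integral_const_mul]
        rw [integral_integral_mul_cexp_inner_add_eq_charFun μ _ hFB]
    _ = c * ∫ ζ, Fh ζ * cexp (I * ⟪ζ, θ⟫) := by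
        simp_rw [hcancel]
        rw [setIntegral_eq_integral_of_forall_compl_eq_zero fun ζ hζ => by
          rw [hsupp ζ (not_le.1 hζ), zero_mul]]
    _ = c * (c * ∫ ζ, (∫ x, (h x : ℂ) * cexp (-I * ⟪ζ, x⟫)) * cexp (I * ⟪ζ, θ⟫)) := by
        simp_rw [hFh, mul_assoc, integral_const_mul]
    _ = h θ := by
        rw [integral_fourier_angular_mul_cexp_inner (f := fun x => (h x : ℂ)) hint.ofReal hFint
          (continuous_ofReal.comp hcont).continuousAt, finrank_euclideanSpace_fin, ← mul_assoc,
          ← mul_assoc, ← ofReal_mul, ← ofReal_mul,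
          rpow_neg_div_two_mul_self_mul_pow (by positivity), ofReal_one, one_mul]

/-- Unbiasedness of the Fourier-analytic estimator: if `h ∈ L¹(ℝ^d)` is continuous with
integrable Fourier transform supported in the ball of radius `R`, `Σ` is positive
semidefinite with square root `S`, `ξ ∼ N(0,Σ)` (realized as the image of the standard
Gaussian under `S`), and
`g(x) = (2π)^{-d/2} ∫_{‖ζ‖≤R} 𝓕h(ζ) e^{⟨Σζ,ζ⟩/2} e^{iζ·x} dζ`, then
`E g(θ+ξ) = h(θ)` for every `θ`. -/
theorem stmt13 (d : ℕ) (R : ℝ) (hR : 0 ≤ R)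
    (h : EuclideanSpace ℝ (Fin d) → ℝ) (hcont : Continuous h) (hint : Integrable h)
    (Fh : EuclideanSpace ℝ (Fin d) → ℂ)
    (hFh : ∀ ζ, Fh ζ = (((2 * Real.pi) ^ (-(d : ℝ) / 2) : ℝ) : ℂ) *
      ∫ x : EuclideanSpace ℝ (Fin d),
        (h x : ℂ) * Complex.exp (-Complex.I * ((inner ℝ ζ x : ℝ) : ℂ)))
    (hFhInt : Integrable Fh)
    (hsupp : ∀ ζ : EuclideanSpace ℝ (Fin d), R < ‖ζ‖ → Fh ζ = 0)
    (Sigm S : Matrix (Fin d) (Fin d) ℝ) (hSigm : Sigm.PosSemidef)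
    (hS : S.PosSemidef) (hSS : S * S = Sigm)
    (μ : Measure (EuclideanSpace ℝ (Fin d)))
    (hμ : μ = Measure.map (fun z => (Matrix.toEuclideanCLM (𝕜 := ℝ) S) z)
      (Measure.map (⇑(EuclideanSpace.equiv (Fin d) ℝ).symm)
        (Measure.pi fun _ : Fin d => ProbabilityTheory.gaussianReal 0 1)))
    (g : EuclideanSpace ℝ (Fin d) → ℂ)
    (hg : ∀ x, g x = (((2 * Real.pi) ^ (-(d : ℝ) / 2) : ℝ) : ℂ) *
      ∫ ζ in {ζ : EuclideanSpace ℝ (Fin d) | ‖ζ‖ ≤ R},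
        Fh ζ *
          Complex.exp
            ((((inner ℝ ((Matrix.toEuclideanCLM (𝕜 := ℝ) Sigm) ζ) ζ : ℝ) : ℂ)) / 2) *
          Complex.exp (Complex.I * ((inner ℝ ζ x : ℝ) : ℂ)))
    (θ : EuclideanSpace ℝ (Fin d)) :
    ∫ x, g (θ + x) ∂μ = (h θ : ℂ) :=
  stmt13_general d R h hcont hint Fh hFh hFhInt hsupp Sigm S hSigm hS hSS μ hμ g hg θ
end

section
/- Let $\theta_0,\dots,\theta_{M-1}\in\mathbb{R}^d$ all satisfy $\|\theta_i\| = r$ for some $r>0$, let $\sigma>0$, and let $\phi_i(x) := (2\pi\sigma^2)^{-d/2}\exp(-\|x-\theta_i\|^2/(2\sigma^2))$ be the Gaussian densities. Then $\int_{\mathbb{R}^d}\max_{0\le i\le M-1}\phi_i(x)\,dx \le \int_{\mathbb{R}^d}\exp\left(\frac{r\|y\|}{\sigma}\vee\frac{r^2}{2\sigma^2}\right)p(y)\,dy \le e^{2r\sqrt{d}/\sigma}\vee e^{r^2/\sigma^2}$, where $p$ is the standard Gaussian density on $\mathbb{R}^d$. -/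
/-!
Write `λ = r/σ` and substitute `x = σ y`. Since `‖θᵢ‖ = r`, the reverse triangle inequality gives
`-‖x - θᵢ‖² ≤ 2r‖x‖ - ‖x‖²`, so every `φᵢ` is dominated by one and the same function of `y`; this is
the first inequality.

For the second, for every `β ≥ 3λ/4` completing the square gives
`max (λt) (λ²/2) ≤ λβ + λt²/(4β)`, and the Gaussian moment `∫ e^{c‖y‖²} p(y) dy = (1 - 2c)^{-d/2}`
together with `-log (1 - u) ≤ 3u` on `[0, 2/3]` bounds the integral by `exp (λβ + 3dλ/(4β))`.
The choice `β = (3/2) max(√d, λ/2)` turns this into `e^{2λ√d}` or `e^{λ²}`.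
-/

open MeasureTheory

noncomputable def stdGaussianDensity (d : ℕ) (y : EuclideanSpace ℝ (Fin d)) : ℝ :=
  (2 * Real.pi) ^ (-(d : ℝ) / 2) * Real.exp (-‖y‖ ^ 2 / 2)

noncomputable def gaussianDensity (d : ℕ) (θ : EuclideanSpace ℝ (Fin d)) (σ : ℝ)
    (x : EuclideanSpace ℝ (Fin d)) : ℝ :=
  (2 * Real.pi * σ ^ 2) ^ (-(d : ℝ) / 2) * Real.exp (-‖x - θ‖ ^ 2 / (2 * σ ^ 2))

lemma max_le_add_mul_sq {l β : ℝ} (hl : 0 < l) (hβ : l / 2 ≤ β) (t : ℝ) :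
    max (l * t) (l ^ 2 / 2) ≤ l * β + l / (4 * β) * t ^ 2 := by
  have hβ0 : 0 < β := by linarith
  have hsq : 0 ≤ l / (4 * β) * (t - 2 * β) ^ 2 := by positivity
  have hexp : l / (4 * β) * (t - 2 * β) ^ 2 = l / (4 * β) * t ^ 2 - l * t + l * β := by
    field_simp; ring
  refine max_le (by linarith) ?_
  nlinarith [div_pos hl (by positivity : (0:ℝ) < 4 * β), sq_nonneg t]

lemma one_sub_rpow_neg_le_exp {u a : ℝ} (hu₀ : 0 ≤ u) (hu : u ≤ 2 / 3) (ha : 0 ≤ a) :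
    (1 - u) ^ (-a) ≤ Real.exp (3 * a * u) := by
  have hpos : 0 < 1 - u := by linarith
  have hlog : -(3 * u) ≤ Real.log (1 - u) := by
    refine le_trans ?_ (Real.one_sub_inv_le_log_of_pos hpos)
    rw [neg_le_sub_iff_le_add, inv_le_iff_one_le_mul₀ hpos]
    nlinarith
  rw [Real.rpow_def_of_pos hpos, Real.exp_le_exp]
  nlinarith

lemma sq_norm_le_sq_norm_sub_add {E : Type*} [SeminormedAddCommGroup E] (x y : E) :
    ‖x‖ ^ 2 ≤ ‖x - y‖ ^ 2 + 2 * ‖x‖ * ‖y‖ := by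
  have h := abs_norm_sub_norm_le x y
  have : (‖x‖ - ‖y‖) ^ 2 ≤ ‖x - y‖ ^ 2 := by
    rw [← sq_abs]; exact pow_le_pow_left₀ (abs_nonneg _) h 2
  nlinarith [sq_nonneg ‖y‖]

section

variable {d : ℕ}

lemma stdGaussianDensity_nonneg (y : EuclideanSpace ℝ (Fin d)) : 0 ≤ stdGaussianDensity d y := by
  unfold stdGaussianDensity; positivity

@[fun_prop]
lemma continuous_stdGaussianDensity : Continuous (stdGaussianDensity d) := by
  unfold stdGaussianDensity; fun_prop

lemma exp_mul_sq_norm_mul_stdGaussianDensity (c : ℝ) (y : EuclideanSpace ℝ (Fin d)) :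
    Real.exp (c * ‖y‖ ^ 2) * stdGaussianDensity d y =
      (2 * Real.pi) ^ (-(d : ℝ) / 2) * Real.exp (-(1 / 2 - c) * ‖y‖ ^ 2) := by
  rw [stdGaussianDensity, mul_left_comm, ← Real.exp_add]
  ring_nf

lemma integral_exp_mul_sq_norm_mul_stdGaussianDensity {c : ℝ} (hc : c < 1 / 2) :
    ∫ y, Real.exp (c * ‖y‖ ^ 2) * stdGaussianDensity d y = (1 - 2 * c) ^ (-(d : ℝ) / 2) := by
  simp_rw [exp_mul_sq_norm_mul_stdGaussianDensity, integral_const_mul]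
  rw [GaussianFourier.integral_rexp_neg_mul_sq_norm (by linarith), finrank_euclideanSpace_fin,
    show Real.pi / (1 / 2 - c) = 2 * Real.pi / (1 - 2 * c) by field_simp,
    Real.div_rpow (by positivity) (by linarith), neg_div, Real.rpow_neg (by positivity),
    Real.rpow_neg (by linarith)]
  have : 0 < (2 * Real.pi) ^ ((d : ℝ) / 2) := by positivity
  field_simp

lemma integrable_exp_mul_sq_norm_mul_stdGaussianDensity {c : ℝ} (hc : c < 1 / 2) :
    Integrable fun y => Real.exp (c * ‖y‖ ^ 2) * stdGaussianDensity d y :=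
  Integrable.of_integral_ne_zero <| by
    rw [integral_exp_mul_sq_norm_mul_stdGaussianDensity hc]
    exact (Real.rpow_pos_of_pos (by linarith) _).ne'

lemma exp_max_mul_stdGaussianDensity_le {l β : ℝ} (hl : 0 < l) (hβ : l / 2 ≤ β)
    (y : EuclideanSpace ℝ (Fin d)) :
    Real.exp (max (l * ‖y‖) (l ^ 2 / 2)) * stdGaussianDensity d y ≤
      Real.exp (l * β) * (Real.exp (l / (4 * β) * ‖y‖ ^ 2) * stdGaussianDensity d y) := by
  rw [← mul_assoc, ← Real.exp_add]
  gcongr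
  · exact stdGaussianDensity_nonneg y
  · exact max_le_add_mul_sq hl hβ _

lemma integrable_exp_max_mul_stdGaussianDensity {l : ℝ} (hl : 0 < l) :
    Integrable fun y : EuclideanSpace ℝ (Fin d) =>
      Real.exp (max (l * ‖y‖) (l ^ 2 / 2)) * stdGaussianDensity d y := by
  have hc : l / (4 * l) < 1 / 2 := by rw [div_mul_cancel_right₀ hl.ne']; norm_num
  refine ((integrable_exp_mul_sq_norm_mul_stdGaussianDensity hc).const_mul
    (Real.exp (l * l))).mono' (by fun_prop) (.of_forall fun y => ?_)
  rw [Real.norm_of_nonneg (mul_nonneg (Real.exp_nonneg _) (stdGaussianDensity_nonneg y))]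
  exact exp_max_mul_stdGaussianDensity_le hl (by linarith) y

lemma integral_exp_max_mul_stdGaussianDensity_le_of_le {l β : ℝ} (hl : 0 < l)
    (hβ : 3 * l / 4 ≤ β) :
    ∫ y : EuclideanSpace ℝ (Fin d), Real.exp (max (l * ‖y‖) (l ^ 2 / 2)) * stdGaussianDensity d y
      ≤ Real.exp (l * β + 3 * d * l / (4 * β)) := by
  have hβ0 : 0 < β := by linarith
  have hu : 2 * (l / (4 * β)) ≤ 2 / 3 := by
    rw [← mul_div_assoc, div_le_div_iff₀ (by positivity) (by norm_num)]; linarith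
  have hc : l / (4 * β) < 1 / 2 := by linarith
  calc ∫ y, Real.exp (max (l * ‖y‖) (l ^ 2 / 2)) * stdGaussianDensity d y
      ≤ ∫ y, Real.exp (l * β) * (Real.exp (l / (4 * β) * ‖y‖ ^ 2) * stdGaussianDensity d y) :=
        integral_mono (integrable_exp_max_mul_stdGaussianDensity hl)
          ((integrable_exp_mul_sq_norm_mul_stdGaussianDensity hc).const_mul _)
          (exp_max_mul_stdGaussianDensity_le hl (by linarith))
    _ = Real.exp (l * β) * (1 - 2 * (l / (4 * β))) ^ (-((d : ℝ) / 2)) := by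
        rw [integral_const_mul, integral_exp_mul_sq_norm_mul_stdGaussianDensity hc, neg_div]
    _ ≤ Real.exp (l * β) * Real.exp (3 * ((d : ℝ) / 2) * (2 * (l / (4 * β)))) := by
        gcongr
        exact one_sub_rpow_neg_le_exp (by positivity) hu (by positivity)
    _ = Real.exp (l * β + 3 * d * l / (4 * β)) := by
        rw [← Real.exp_add]; ring_nf

lemma integral_exp_max_mul_stdGaussianDensity_le {l : ℝ} (hl : 0 < l) :
    ∫ y : EuclideanSpace ℝ (Fin d), Real.exp (max (l * ‖y‖) (l ^ 2 / 2)) * stdGaussianDensity d y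
      ≤ max (Real.exp (2 * l * Real.sqrt d)) (Real.exp (l ^ 2)) := by
  have hd : Real.sqrt d ^ 2 = d := Real.sq_sqrt d.cast_nonneg
  rcases le_total (l / 2) (Real.sqrt d) with h | h
  · have hs : 0 < Real.sqrt d := by linarith
    refine (integral_exp_max_mul_stdGaussianDensity_le_of_le hl
      (β := 3 / 2 * Real.sqrt d) (by linarith)).trans (le_max_of_le_left (le_of_eq ?_))
    congr 1; field_simp; linear_combination -4 * hd
  · refine (integral_exp_max_mul_stdGaussianDensity_le_of_le hl
      (β := 3 * l / 4) le_rfl).trans (le_max_of_le_right ?_)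
    rw [Real.exp_le_exp, show 3 * (d : ℝ) * l / (4 * (3 * l / 4)) = d by field_simp, ← hd]
    nlinarith [Real.sqrt_nonneg d]

lemma two_pi_mul_sq_rpow {σ : ℝ} (hσ : 0 < σ) :
    (2 * Real.pi * σ ^ 2) ^ (-(d : ℝ) / 2) = (σ ^ d)⁻¹ * (2 * Real.pi) ^ (-(d : ℝ) / 2) := by
  rw [Real.mul_rpow (by positivity) (by positivity), mul_comm, ← Real.rpow_natCast σ 2,
    ← Real.rpow_mul hσ.le, ← Real.rpow_natCast σ d, ← Real.rpow_neg hσ.le]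
  congr 2
  push_cast
  ring

lemma gaussianDensity_le {σ : ℝ} (hσ : 0 < σ) (θ x : EuclideanSpace ℝ (Fin d)) :
    gaussianDensity d θ σ x ≤ (σ ^ d)⁻¹ *
      (Real.exp (max (‖θ‖ / σ * ‖σ⁻¹ • x‖) ((‖θ‖ / σ) ^ 2 / 2)) *
        stdGaussianDensity d (σ⁻¹ • x)) := by
  have hexp : -‖x - θ‖ ^ 2 / (2 * σ ^ 2) ≤ ‖θ‖ / σ * ‖σ⁻¹ • x‖ - ‖σ⁻¹ • x‖ ^ 2 / 2 := by
    rw [norm_smul, Real.norm_of_nonneg (inv_nonneg.2 hσ.le),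
      show ‖θ‖ / σ * (σ⁻¹ * ‖x‖) - (σ⁻¹ * ‖x‖) ^ 2 / 2 = (2 * ‖x‖ * ‖θ‖ - ‖x‖ ^ 2) / (2 * σ ^ 2) by
        field_simp]
    gcongr
    linarith [sq_norm_le_sq_norm_sub_add x θ]
  calc gaussianDensity d θ σ x
      = (σ ^ d)⁻¹ * ((2 * Real.pi) ^ (-(d : ℝ) / 2) * Real.exp (-‖x - θ‖ ^ 2 / (2 * σ ^ 2))) := by
        rw [gaussianDensity, two_pi_mul_sq_rpow hσ, mul_assoc]
    _ ≤ (σ ^ d)⁻¹ * ((2 * Real.pi) ^ (-(d : ℝ) / 2) *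
          Real.exp (max (‖θ‖ / σ * ‖σ⁻¹ • x‖) ((‖θ‖ / σ) ^ 2 / 2) + -‖σ⁻¹ • x‖ ^ 2 / 2)) := by
        gcongr
        linarith [le_max_left (‖θ‖ / σ * ‖σ⁻¹ • x‖) ((‖θ‖ / σ) ^ 2 / 2)]
    _ = _ := by rw [Real.exp_add, stdGaussianDensity]; ring

lemma integral_iSup_gaussianDensity_le {ι : Sort*} {r σ : ℝ} (hr : 0 < r) (hσ : 0 < σ)
    (θ : ι → EuclideanSpace ℝ (Fin d)) (hθ : ∀ i, ‖θ i‖ = r) :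
    ∫ x, ⨆ i, gaussianDensity d (θ i) σ x ≤
      ∫ y, Real.exp (max (r / σ * ‖y‖) ((r / σ) ^ 2 / 2)) * stdGaussianDensity d y := by
  set F := fun y => Real.exp (max (r / σ * ‖y‖) ((r / σ) ^ 2 / 2)) * stdGaussianDensity d y
  have hF : 0 ≤ F := fun y => mul_nonneg (Real.exp_nonneg _) (stdGaussianDensity_nonneg y)
  calc ∫ x, ⨆ i, gaussianDensity d (θ i) σ x
      ≤ ∫ x, (σ ^ d)⁻¹ * F (σ⁻¹ • x) := by
        refine integral_mono_of_nonneg (.of_forall fun x => Real.iSup_nonneg fun i => ?_)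
          (((integrable_exp_max_mul_stdGaussianDensity (div_pos hr hσ)).comp_smul
            (inv_ne_zero hσ.ne')).const_mul _)
          (.of_forall fun x => Real.iSup_le (fun i => by
            simpa only [hθ i] using gaussianDensity_le hσ (θ i) x)
            (mul_nonneg (by positivity) (hF _)))
        unfold gaussianDensity; positivity
    _ = ∫ y, F y := by
        rw [integral_const_mul, Measure.integral_comp_inv_smul_of_nonneg _ _ hσ.le,
          finrank_euclideanSpace_fin, smul_eq_mul, inv_mul_cancel_left₀ (by positivity)]

end

theorem stmt16_general (d M : ℕ) (r σ : ℝ) (hr : 0 < r) (hσ : 0 < σ)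
    (θ : Fin M → EuclideanSpace ℝ (Fin d)) (hθ : ∀ i, ‖θ i‖ = r) :
    (∫ x : EuclideanSpace ℝ (Fin d),
        ⨆ i, (2 * Real.pi * σ ^ 2) ^ (-(d : ℝ) / 2) *
          Real.exp (-‖x - θ i‖ ^ 2 / (2 * σ ^ 2))) ≤
      (∫ y : EuclideanSpace ℝ (Fin d),
        Real.exp (max (r * ‖y‖ / σ) (r ^ 2 / (2 * σ ^ 2))) *
          ((2 * Real.pi) ^ (-(d : ℝ) / 2) * Real.exp (-‖y‖ ^ 2 / 2))) ∧
    (∫ y : EuclideanSpace ℝ (Fin d),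
        Real.exp (max (r * ‖y‖ / σ) (r ^ 2 / (2 * σ ^ 2))) *
          ((2 * Real.pi) ^ (-(d : ℝ) / 2) * Real.exp (-‖y‖ ^ 2 / 2))) ≤
      max (Real.exp (2 * r * Real.sqrt d / σ)) (Real.exp (r ^ 2 / σ ^ 2)) := by
  have hmax (y : EuclideanSpace ℝ (Fin d)) :
      max (r * ‖y‖ / σ) (r ^ 2 / (2 * σ ^ 2)) = max (r / σ * ‖y‖) ((r / σ) ^ 2 / 2) := by
    rw [div_pow]; ring_nf
  simp only [hmax]
  refine ⟨integral_iSup_gaussianDensity_le hr hσ θ hθ,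
    (integral_exp_max_mul_stdGaussianDensity_le (div_pos hr hσ)).trans_eq ?_⟩
  rw [div_pow]; ring_nf

/-- If `θ_0, …, θ_{M-1} ∈ ℝ^d` all have norm `r` and `φ_i` are the `N(θ_i, σ²I)`
densities, then `∫ max_i φ_i ≤ ∫ e^{(r‖y‖/σ) ∨ (r²/(2σ²))} p(y) dy ≤ e^{2r√d/σ} ∨ e^{r²/σ²}`,
where `p` is the standard Gaussian density. -/
theorem stmt16 (d M : ℕ) (hM : 0 < M) (r σ : ℝ) (hr : 0 < r) (hσ : 0 < σ)
    (θ : Fin M → EuclideanSpace ℝ (Fin d)) (hθ : ∀ i, ‖θ i‖ = r) :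
    (∫ x : EuclideanSpace ℝ (Fin d),
        ⨆ i, (2 * Real.pi * σ ^ 2) ^ (-(d : ℝ) / 2) *
          Real.exp (-‖x - θ i‖ ^ 2 / (2 * σ ^ 2))) ≤
      (∫ y : EuclideanSpace ℝ (Fin d),
        Real.exp (max (r * ‖y‖ / σ) (r ^ 2 / (2 * σ ^ 2))) *
          ((2 * Real.pi) ^ (-(d : ℝ) / 2) * Real.exp (-‖y‖ ^ 2 / 2))) ∧
    (∫ y : EuclideanSpace ℝ (Fin d),
        Real.exp (max (r * ‖y‖ / σ) (r ^ 2 / (2 * σ ^ 2))) *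
          ((2 * Real.pi) ^ (-(d : ℝ) / 2) * Real.exp (-‖y‖ ^ 2 / 2))) ≤
      max (Real.exp (2 * r * Real.sqrt d / σ)) (Real.exp (r ^ 2 / σ ^ 2)) :=
  stmt16_general d M r σ hr hσ θ hθ
end
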